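/- (Theorem 3.2, odd case.) Let n be odd, M > 0, let A be a real n × n matrix all of whose complex eigenvalues have positive real part (anti-stable), and let b, k ∈ ℝⁿ be such that all complex eigenvalues of A + b kᵀ have negative real part (stabilizing feedback). Then the closed loop system ẋ = A x + b·sat_M(⟨k, x⟩) has exactly three equilibrium points: the set {x ∈ ℝⁿ : A x + sat_M(⟨k, x⟩)·b = 0} equals {0, −M·A⁻¹ b, M·A⁻¹ b}, and these three points are pairwise distinct. Moreover every equilibrium is in general position, i.e. satisfies ⟨k, x⟩ ≠ ±M. -/

import Mathlib

/-!
Anti-stability makes `det A > 0`, and since `n` is odd the Hurwitz matrix `A + b kᵀ` has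
`det (A + b kᵀ) < 0`: in both cases the characteristic polynomial has no real root on one side
of `0`, so its sign at `0` is read off at infinity. By the matrix determinant lemma
`det (A + b kᵀ) = det A · (1 + ⟪k, A⁻¹ b⟫)`, hence `⟪k, A⁻¹ b⟫ < -1`.

An equilibrium satisfies `x = -sat_M ⟪k, x⟫ • A⁻¹ b`. In the saturated regions this is `∓M • A⁻¹ b`
(and `⟪k, ∓M • A⁻¹ b⟫ = ∓M ⟪k, A⁻¹ b⟫` does lie strictly beyond `±M`), while in the linear region
`⟪k, x⟫ (1 + ⟪k, A⁻¹ b⟫) = 0` forces `x = 0`.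
-/

open RealInnerProductSpace

/-- The saturation function `sat_M (s) = sign(s) · min (M, |s|)`. -/
noncomputable def sat (M s : ℝ) : ℝ := Real.sign s * min M |s|

open Polynomial Matrix

lemma sat_of_abs_le {M s : ℝ} (h : |s| ≤ M) : sat M s = s := by
  rw [sat, min_eq_right h]
  rcases lt_trichotomy s 0 with hs | rfl | hs
  · rw [Real.sign_of_neg hs, abs_of_neg hs]; ring
  · simp
  · rw [Real.sign_of_pos hs, abs_of_pos hs, one_mul]

lemma sat_of_le {M s : ℝ} (hM : 0 < M) (h : M ≤ s) : sat M s = M := by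
  have hs : 0 < s := hM.trans_le h
  rw [sat, Real.sign_of_pos hs, abs_of_pos hs, min_eq_left h, one_mul]

lemma sat_of_le_neg {M s : ℝ} (hM : 0 < M) (h : s ≤ -M) : sat M s = -M := by
  have hs : s < 0 := h.trans_lt (neg_lt_zero.mpr hM)
  rw [sat, Real.sign_of_neg hs, abs_of_neg hs, min_eq_left (le_neg.mpr h), neg_one_mul]

namespace Polynomial

theorem eval_zero_pos_of_forall_nonneg_not_isRoot {p : ℝ[X]} (hlc : 0 < p.leadingCoeff)
    (h : ∀ t : ℝ, 0 ≤ t → ¬ p.IsRoot t) : 0 < p.eval 0 := by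
  rcases Nat.eq_zero_or_pos p.natDegree with hd | hd
  · rwa [← coeff_zero_eq_eval_zero, ← hd]
  by_contra! h0
  obtain ⟨x, hx, hx0⟩ := ((p.tendsto_atTop_of_leadingCoeff_nonneg
    (natDegree_pos_iff_degree_pos.mp hd) hlc.le).eventually_ge_atTop 0
    |>.and (Filter.eventually_ge_atTop 0)).exists
  obtain ⟨t, ht, hpt⟩ := intermediate_value_Icc hx0 p.continuous.continuousOn ⟨h0, hx⟩
  exact h t ht.1 hpt

theorem neg_one_pow_natDegree_mul_eval_zero_pos {p : ℝ[X]} (hlc : 0 < p.leadingCoeff)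
    (h : ∀ t : ℝ, t ≤ 0 → ¬ p.IsRoot t) : 0 < (-1) ^ p.natDegree * p.eval 0 := by
  set q := C ((-1) ^ p.natDegree) * p.comp (-X)
  have hq : ∀ t, q.eval t = (-1) ^ p.natDegree * p.eval (-t) := by simp [q, eval_comp]
  have hlcq : q.leadingCoeff = p.leadingCoeff := by
    rw [leadingCoeff_mul, leadingCoeff_C, leadingCoeff_comp (by simp), leadingCoeff_neg,
      leadingCoeff_X, mul_comm, mul_assoc, ← pow_add, Even.neg_one_pow ⟨_, rfl⟩, mul_one]
  have := eval_zero_pos_of_forall_nonneg_not_isRoot (hlcq ▸ hlc) fun t ht hroot =>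
    h (-t) (by linarith) (by simpa [IsRoot, hq] using hroot)
  rwa [hq, neg_zero] at this

end Polynomial

namespace Matrix

variable {ι : Type*} [Fintype ι] [DecidableEq ι]

lemma ofReal_mem_roots_charpoly_map {A : Matrix ι ι ℝ} {t : ℝ} (ht : A.charpoly.IsRoot t) :
    (t : ℂ) ∈ (A.map (algebraMap ℝ ℂ)).charpoly.roots := by
  rw [charpoly_map, mem_roots (A.charpoly_monic.map _).ne_zero]
  exact ht.map

lemma det_pos_of_forall_re_pos (A : Matrix ι ι ℝ)
    (hA : ∀ μ ∈ (A.map (algebraMap ℝ ℂ)).charpoly.roots, 0 < μ.re) : 0 < A.det := by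
  have := neg_one_pow_natDegree_mul_eval_zero_pos (A.charpoly_monic.leadingCoeff ▸ one_pos)
    fun t ht hroot => by simpa using (hA _ (ofReal_mem_roots_charpoly_map hroot)).trans_le ht
  rwa [charpoly_natDegree_eq_dim, ← coeff_zero_eq_eval_zero, ← det_eq_sign_charpoly_coeff]
    at this

lemma neg_one_pow_card_mul_det_pos_of_forall_re_neg (A : Matrix ι ι ℝ)
    (hA : ∀ μ ∈ (A.map (algebraMap ℝ ℂ)).charpoly.roots, μ.re < 0) :
    0 < (-1) ^ Fintype.card ι * A.det := by
  have := eval_zero_pos_of_forall_nonneg_not_isRoot (A.charpoly_monic.leadingCoeff ▸ one_pos)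
    fun t ht hroot => by simpa using ht.trans_lt (hA _ (ofReal_mem_roots_charpoly_map hroot))
  rwa [det_eq_sign_charpoly_coeff, ← mul_assoc, ← pow_add, Even.neg_one_pow ⟨_, rfl⟩, one_mul,
    coeff_zero_eq_eval_zero]

lemma toEuclideanLin_toEuclideanLin_inv {A : Matrix ι ι ℝ} (hA : IsUnit A.det)
    (v : EuclideanSpace ℝ ι) : toEuclideanLin A (toEuclideanLin A⁻¹ v) = v := by
  rw [← LinearMap.comp_apply, ← toLpLin_mul_same, mul_nonsing_inv A hA, toLpLin_one,
    LinearMap.id_apply]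

lemma toEuclideanLin_injective {A : Matrix ι ι ℝ} (hA : IsUnit A.det) :
    Function.Injective (toEuclideanLin A) := by
  refine LinearMap.injective_of_comp_eq_id _ (toEuclideanLin A⁻¹) ?_
  rw [← toLpLin_mul_same, nonsing_inv_mul A hA, toLpLin_one]

lemma det_add_vecMulVec {R : Type*} [CommRing R] {A : Matrix ι ι R} (hA : IsUnit A.det)
    (u v : ι → R) : (A + vecMulVec u v).det = A.det * (1 + v ⬝ᵥ A⁻¹ *ᵥ u) := by
  rw [vecMulVec_eq Unit, det_add_replicateCol_mul_replicateRow hA, Matrix.mul_assoc,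
    ← replicateCol_mulVec, det_unique (1 + _ : Matrix Unit Unit R), add_apply, one_apply_eq,
    replicateRow_mul_replicateCol_apply]

end Matrix

section Equilibria

variable {E : Type*} [NormedAddCommGroup E] [InnerProductSpace ℝ E] {T : E →ₗ[ℝ] E}
  {M : ℝ} {b k u x : E}

lemma eq_neg_sat_smul_of_equilibrium (hT : Function.Injective T) (hu : T u = b)
    (hx : T x + sat M ⟪k, x⟫ • b = 0) : x = -(sat M ⟪k, x⟫ • u) := by
  rw [eq_neg_iff_add_eq_zero, ← T.map_eq_zero_iff hT, map_add, map_smul, hu, hx]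

lemma equilibrium_iff (hM : 0 < M) (hT : Function.Injective T) (hu : T u = b)
    (hc : ⟪k, u⟫ < -1) :
    T x + sat M ⟪k, x⟫ • b = 0 ↔ x = 0 ∨ x = -(M • u) ∨ x = M • u := by
  constructor
  · intro hx
    have hxu := eq_neg_sat_smul_of_equilibrium hT hu hx
    rcases le_total M ⟪k, x⟫ with hup | hup
    · exact .inr (.inl (by rwa [sat_of_le hM hup] at hxu))
    rcases le_total ⟪k, x⟫ (-M) with hlow | hlow
    · exact .inr (.inr (by rwa [sat_of_le_neg hM hlow, neg_smul, neg_neg] at hxu))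
    have hsat := sat_of_abs_le (abs_le.mpr ⟨hlow, hup⟩)
    have hkx : ⟪k, x⟫ * (1 + ⟪k, u⟫) = 0 := by
      have := congrArg (⟪k, ·⟫) hxu
      simp only [inner_neg_right, inner_smul_right, hsat] at this
      linear_combination this
    have hkx0 : ⟪k, x⟫ = 0 := (mul_eq_zero.mp hkx).resolve_right (by linarith)
    exact .inl (by rwa [hsat, hkx0, zero_smul, neg_zero] at hxu)
  · rintro (rfl | rfl | rfl)
    · simp [sat_of_abs_le (abs_zero.trans_le hM.le)]
    · rw [inner_neg_right, inner_smul_right, sat_of_le hM (by nlinarith), map_neg, map_smul, hu,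
        neg_add_cancel]
    · rw [inner_smul_right, sat_of_le_neg hM (by nlinarith), map_smul, hu, neg_smul,
        add_neg_cancel]

lemma inner_ne_of_mem_equilibria (hM : 0 < M) (hc : ⟪k, u⟫ < -1)
    (hx : x = 0 ∨ x = -(M • u) ∨ x = M • u) : ⟪k, x⟫ ≠ M ∧ ⟪k, x⟫ ≠ -M := by
  rcases hx with rfl | rfl | rfl
  · simp [hM.ne, hM.ne']
  · simp only [inner_neg_right, inner_smul_right]
    constructor <;> nlinarith
  · simp only [inner_smul_right]
    constructor <;> nlinarith

end Equilibria

/-- Theorem 3.2, odd case: if `n` is odd, `A` is anti-stable and the feedback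
`A + b kᵀ` is Hurwitz, then the closed loop system `ẋ = A x + b · sat_M(⟨k, x⟩)`
has exactly the three pairwise distinct equilibrium points
`0`, `-M • A⁻¹ b` and `M • A⁻¹ b`, all in general position (`⟨k, x⟩ ≠ ±M`). -/
theorem three_equilibria_odd {n : ℕ} (hn : Odd n) (M : ℝ) (hM : 0 < M)
    (A : Matrix (Fin n) (Fin n) ℝ) (b k : EuclideanSpace ℝ (Fin n))
    (hA : ∀ μ ∈ (Matrix.charpoly (A.map (algebraMap ℝ ℂ))).roots, 0 < μ.re)
    (hABK : ∀ μ ∈ (Matrix.charpoly ((A + Matrix.vecMulVec b k).map (algebraMap ℝ ℂ))).roots,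
      μ.re < 0) :
    ({x : EuclideanSpace ℝ (Fin n) | Matrix.toEuclideanLin A x + sat M ⟪k, x⟫ • b = 0}
        = {0, -(M • Matrix.toEuclideanLin A⁻¹ b), M • Matrix.toEuclideanLin A⁻¹ b}) ∧
    ((0 : EuclideanSpace ℝ (Fin n)) ≠ -(M • Matrix.toEuclideanLin A⁻¹ b) ∧
      (0 : EuclideanSpace ℝ (Fin n)) ≠ M • Matrix.toEuclideanLin A⁻¹ b ∧
      -(M • Matrix.toEuclideanLin A⁻¹ b) ≠ M • Matrix.toEuclideanLin A⁻¹ b) ∧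
    (∀ x : EuclideanSpace ℝ (Fin n),
      Matrix.toEuclideanLin A x + sat M ⟪k, x⟫ • b = 0 →
        ⟪k, x⟫ ≠ M ∧ ⟪k, x⟫ ≠ -M) := by
  set u := toEuclideanLin A⁻¹ b
  have hdetA := det_pos_of_forall_re_pos A hA
  have hunit : IsUnit A.det := hdetA.ne'.isUnit
  have hc : ⟪k, u⟫ < -1 := by
    have hdet := neg_one_pow_card_mul_det_pos_of_forall_re_neg _ hABK
    rw [Fintype.card_fin, hn.neg_one_pow, det_add_vecMulVec hunit] at hdet
    have hku : ⟪k, u⟫ = WithLp.ofLp k ⬝ᵥ A⁻¹ *ᵥ WithLp.ofLp b := dotProduct_comm _ _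
    nlinarith
  have hiff := fun x => equilibrium_iff (x := x) hM (toEuclideanLin_injective hunit)
    (toEuclideanLin_toEuclideanLin_inv hunit b) hc
  have hu0 : M • u ≠ 0 :=
    smul_ne_zero hM.ne' fun h => by rw [h, inner_zero_right] at hc; norm_num at hc
  have hneg : -(M • u) ≠ M • u := by
    rwa [Ne, neg_eq_iff_add_eq_zero, ← two_smul ℝ, smul_eq_zero, not_or,
      and_iff_right two_ne_zero]
  exact ⟨Set.ext hiff, ⟨(neg_ne_zero.mpr hu0).symm, hu0.symm, hneg⟩,
    fun x hx => inner_ne_of_mem_equilibria hM hc ((hiff x).mp hx)⟩
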